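/- The map (x, y) ↦ x ▷ y defines a left monoid action of the Demazure monoid (W, ∗) on the set W; that is, 1 ▷ y = y and (x ∗ y) ▷ z = x ▷ (y ▷ z) for all x, y, z ∈ W. -/

import Mathlib

/-- The Bruhat order on a Coxeter group, via the subword property: `x ≤ y` iff some
reduced word for `y` has a subword whose product is `x`. -/
def CoxeterSystem.bruhatLE {B W : Type*} [Group W] {M : CoxeterMatrix B}
    (cs : CoxeterSystem M W) (x y : W) : Prop :=
  ∃ ω ω' : List B, cs.IsReduced ω ∧ cs.wordProd ω = y ∧
    List.Sublist ω' ω ∧ cs.wordProd ω' = x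

/-- The set of products `u * y` with `u ≤ x` in the Bruhat order. -/
def CoxeterSystem.triSet {B W : Type*} [Group W] {M : CoxeterMatrix B}
    (cs : CoxeterSystem M W) (x y : W) : Set W :=
  {w | ∃ u : W, cs.bruhatLE u x ∧ w = u * y}

/-- `m` is the unique minimal element of `S` with respect to the Bruhat order. -/
def CoxeterSystem.IsUniqueBruhatMin {B W : Type*} [Group W] {M : CoxeterMatrix B}
    (cs : CoxeterSystem M W) (S : Set W) (m : W) : Prop :=
  (m ∈ S ∧ ∀ z ∈ S, cs.bruhatLE z m → z = m) ∧
    ∀ z ∈ S, (∀ z' ∈ S, cs.bruhatLE z' z → z' = z) → z = m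

/-!
For a simple reflection `s`, the set `{u m : u ≤ s}` is `{m, s m}`, so `s ▷ m` is the shorter of
`m` and `s m`; and `s ∗ v` is `s v` or `v` according as `s v` is longer than `v` or not. Hence,
by induction along a reduced word for `x`, it suffices to show that `(s w) ▷ z = s ▷ (w ▷ z)`
when `s w > w`, and that `s ▷ (v ▷ z) = v ▷ z` when `s v < v`. Both follow from the lifting
property of the Bruhat order: `u ≤ s w` implies `u ≤ w` or `s u ≤ w`. Lifting, like
transitivity, rests on the subword property holding for every reduced word, which is obtained by
comparing with the chain description of the Bruhat order; the strong exchange condition it needs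
comes from the reflection representation of `W` on `W × ZMod 2`.
-/
open List

namespace CoxeterSystem

variable {B W : Type*} [Group W] {M : CoxeterMatrix B} (cs : CoxeterSystem M W)

local prefix:100 "s " => cs.simple
local prefix:100 "π " => cs.wordProd
local prefix:100 "ℓ " => cs.length
local prefix:100 "ris " => cs.rightInvSeq

theorem simple_mul_mul_simple_eq_iff {i : B} {x y : W} :
    s i * x * s i = y ↔ x = s i * y * s i := by
  constructor <;> rintro rfl <;> simp [mul_assoc]

section ReflectionRepresentation

variable [DecidableEq W]

def reflPerm (i : B) : Equiv.Perm (W × ZMod 2) :=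
  Function.Involutive.toPerm (fun q ↦ (s i * q.1 * s i, q.2 + if q.1 = s i then 1 else 0)) <| by
    rintro ⟨t, ε⟩
    have hconj : s i * t * s i = s i ↔ t = s i := by
      simp [mul_assoc, mul_eq_one_iff_eq_inv]
    ext
    · simp [mul_assoc]
    · dsimp only
      split_ifs <;> simp_all [add_assoc, CharTwo.add_self_eq_zero]

theorem reflPerm_apply (i : B) (t : W) (ε : ZMod 2) :
    cs.reflPerm i (t, ε) = (s i * t * s i, ε + if t = s i then 1 else 0) := rfl

theorem reflPerm_mul_reflPerm_pow_apply (i j : B) (n : ℕ) (t : W) (ε : ZMod 2) :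
    ((cs.reflPerm i * cs.reflPerm j) ^ n) (t, ε) =
      ((s i * s j) ^ n * t * ((s i * s j) ^ n)⁻¹,
        ε + ∑ a ∈ Finset.range (2 * n),
          if t = ((s i * s j) ^ (a + 1))⁻¹ * s i then 1 else 0) := by
  have hstep (t : W) (ε : ZMod 2) : (cs.reflPerm i * cs.reflPerm j) (t, ε) =
      ((s i * s j) * t * (s i * s j)⁻¹,
        ε + ∑ a ∈ Finset.range 2,
          if t = ((s i * s j) ^ (a + 1))⁻¹ * s i then 1 else 0) := by
    have h1 : ((s i * s j) ^ (0 + 1))⁻¹ * s i = s j := by simp [mul_assoc]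
    have h2 : ((s i * s j) ^ (1 + 1))⁻¹ * s i = s j * s i * s j := by simp [pow_two, mul_assoc]
    simp only [Equiv.Perm.mul_apply, reflPerm_apply, Finset.sum_range_succ, Finset.sum_range_zero,
      h1, h2, simple_mul_mul_simple_eq_iff]
    simp [mul_assoc, add_assoc]
  have hshift (t : W) (a : ℕ) :
      (s i * s j) * t * (s i * s j)⁻¹ = ((s i * s j) ^ (a + 1))⁻¹ * s i ↔
      t = ((s i * s j) ^ (2 + a + 1))⁻¹ * s i := by
    generalize hr : s i * s j = r
    have hsr : s i * r = r⁻¹ * s i := by simp [← hr, mul_assoc]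
    have : (r ^ (2 + a + 1))⁻¹ * s i = r⁻¹ * (r ^ (a + 1))⁻¹ * (s i * r) := by
      rw [hsr]; group
    rw [this, ← mul_assoc, eq_comm, ← mul_inv_eq_iff_eq_mul, ← inv_mul_eq_iff_eq_mul, eq_comm]
    group
  induction n generalizing t ε with
  | zero => simp
  | succ n ih =>
    rw [pow_succ, Equiv.Perm.mul_apply, hstep, ih, mul_add_one, add_comm (2 * n),
      Finset.sum_range_add]
    simp only [hshift]
    refine Prod.ext ?_ ?_
    · generalize s i * s j = r
      group
    · dsimp only
      ring

theorem isLiftable_reflPerm : M.IsLiftable cs.reflPerm := by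
  intro i j
  ext ⟨t, ε⟩ : 1
  have hper (a : ℕ) : (s i * s j) ^ (M i j + a + 1) = (s i * s j) ^ (a + 1) := by
    rw [add_assoc, pow_add, simple_mul_simple_pow, one_mul]
  rw [reflPerm_mul_reflPerm_pow_apply, simple_mul_simple_pow, two_mul, Finset.sum_range_add]
  simp [hper, CharTwo.add_self_eq_zero]

/-- Since this is a homomorphism, the parity of the number of occurrences of `t` in the right
inversion sequence of a word depends only on the product of the word (`inversionParity`). -/
def reflRep : W →* Equiv.Perm (W × ZMod 2) := cs.lift ⟨cs.reflPerm, cs.isLiftable_reflPerm⟩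

theorem reflRep_wordProd_apply (ω : List B) (t : W) (ε : ZMod 2) :
    cs.reflRep (π ω) (t, ε) = (π ω * t * (π ω)⁻¹, ε + (ris ω).count t) := by
  induction ω generalizing ε with
  | nil => simp
  | cons i ω ih =>
    have hcond : π ω * t * (π ω)⁻¹ = s i ↔ (π ω)⁻¹ * s i * π ω = t := by
      constructor <;> intro h <;> rw [← h] <;> group
    rw [wordProd_cons, map_mul, Equiv.Perm.mul_apply, ih, reflRep, lift_apply_simple,
      reflPerm_apply, rightInvSeq, count_cons]
    refine Prod.ext (by simp [mul_assoc]) ?_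
    simp [hcond, add_assoc]

def inversionParity (w t : W) : ZMod 2 := (cs.reflRep w (t, 0)).2

theorem inversionParity_wordProd (ω : List B) (t : W) :
    cs.inversionParity (π ω) t = (ris ω).count t := by
  rw [inversionParity, reflRep_wordProd_apply, zero_add]

theorem reflRep_apply (w t : W) (ε : ZMod 2) :
    cs.reflRep w (t, ε) = (w * t * w⁻¹, ε + cs.inversionParity w t) := by
  obtain ⟨ω, rfl⟩ := cs.wordProd_surjective w
  rw [reflRep_wordProd_apply, inversionParity_wordProd]

theorem inversionParity_mul (v w t : W) :
    cs.inversionParity (v * w) t =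
      cs.inversionParity w t + cs.inversionParity v (w * t * w⁻¹) := by
  rw [inversionParity, map_mul, Equiv.Perm.mul_apply, reflRep_apply, reflRep_apply, zero_add]

theorem inversionParity_one (t : W) : cs.inversionParity 1 t = 0 := by
  simpa using cs.inversionParity_wordProd [] t

theorem inversionParity_simple_self (i : B) : cs.inversionParity (s i) (s i) = 1 := by
  simpa using cs.inversionParity_wordProd [i] (s i)

variable {cs} in
theorem IsReflection.inversionParity_self {t : W} (ht : cs.IsReflection t) :
    cs.inversionParity t t = 1 := by
  obtain ⟨u, i, rfl⟩ := ht
  have h1 := cs.inversionParity_mul u u⁻¹ (u * s i * u⁻¹)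
  rw [mul_inv_cancel, inversionParity_one] at h1
  rw [inversionParity_mul, inversionParity_mul]
  simp only [inv_inv, mul_assoc, inv_mul_cancel_left, inv_mul_cancel, mul_one, inv_simple,
    simple_mul_simple_cancel_left] at h1 ⊢
  rw [inversionParity_simple_self, add_left_comm, ← h1, add_zero]

variable {cs} in
theorem IsRightInversion.inversionParity_eq_one {w t : W} (h : cs.IsRightInversion w t) :
    cs.inversionParity w t = 1 := by
  have ht := h.1
  obtain ⟨ω, hω, hωw⟩ := cs.exists_isReduced (w * t)
  have hnot : t ∉ ris ω := fun hmem ↦ ht.isRightInversion_mul_left_iff.mp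
    (hωw ▸ cs.isRightInversion_of_mem_rightInvSeq hω hmem) h
  have hwt : cs.inversionParity (w * t) t = 0 := by
    rw [hωw, inversionParity_wordProd, count_eq_zero.mpr hnot, Nat.cast_zero]
  calc cs.inversionParity w t = cs.inversionParity (w * t * t) t := by
        rw [mul_assoc, ht.mul_self, mul_one]
    _ = 1 := by
        rw [inversionParity_mul, ht.inversionParity_self, ht.mul_self, one_mul, ht.inv, hwt,
          add_zero]

end ReflectionRepresentation

theorem mem_rightInvSeq_of_isRightInversion {ω : List B} {t : W}
    (h : cs.IsRightInversion (π ω) t) : t ∈ ris ω := by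
  classical
  by_contra hnot
  have := h.inversionParity_eq_one
  rw [inversionParity_wordProd, count_eq_zero.mpr hnot, Nat.cast_zero] at this
  exact zero_ne_one this

theorem mem_leftInvSeq_of_isLeftInversion {ω : List B} {t : W}
    (h : cs.IsLeftInversion (π ω) t) : t ∈ cs.leftInvSeq ω := by
  rw [← isRightInversion_inv_iff, ← wordProd_reverse] at h
  simpa [rightInvSeq_reverse] using cs.mem_rightInvSeq_of_isRightInversion h

variable {cs} in
theorem IsLeftInversion.exists_eraseIdx {ω : List B} {t : W} (h : cs.IsLeftInversion (π ω) t) :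
    ∃ j < ω.length, t * π ω = π (ω.eraseIdx j) := by
  obtain ⟨j, hj, rfl⟩ := mem_iff_getElem.mp (cs.mem_leftInvSeq_of_isLeftInversion h)
  rw [length_leftInvSeq] at hj
  exact ⟨j, hj, by rw [← getD_eq_getElem _ 1, getD_leftInvSeq_mul_wordProd]⟩

theorem isReduced_cons_iff {i : B} {ω : List B} :
    cs.IsReduced (i :: ω) ↔ cs.IsReduced ω ∧ ¬cs.IsLeftDescent (π ω) i := by
  rw [not_isLeftDescent_iff]
  constructor
  · intro h
    have hω : cs.IsReduced ω := by simpa using h.drop 1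
    have h' := h.eq
    rw [wordProd_cons, length_cons, ← hω.eq] at h'
    exact ⟨hω, h'⟩
  · rintro ⟨hω, h⟩
    change ℓ (π (i :: ω)) = (i :: ω).length
    rw [wordProd_cons, h, hω.eq, length_cons]

theorem not_isLeftDescent_iff_length_lt {w : W} {i : B} :
    ¬cs.IsLeftDescent w i ↔ ℓ w < ℓ (s i * w) := by
  rw [IsLeftDescent, not_lt]
  exact ⟨fun h ↦ lt_of_le_of_ne h (cs.length_simple_mul_ne w i).symm, le_of_lt⟩

theorem exists_isReduced_sublist (ω : List B) :
    ∃ τ, τ <+ ω ∧ cs.IsReduced τ ∧ π τ = π ω := by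
  induction ω with
  | nil => exact ⟨[], Sublist.slnil, by simp [IsReduced], rfl⟩
  | cons i ω ih =>
    obtain ⟨τ, hτω, hτ, hπ⟩ := ih
    by_cases hi : cs.IsLeftDescent (π τ) i
    · obtain ⟨j, hj, hτj⟩ := IsLeftInversion.exists_eraseIdx
        ((cs.isLeftInversion_simple_iff_isLeftDescent _ i).mpr hi)
      refine ⟨τ.eraseIdx j, (eraseIdx_sublist τ j).trans (hτω.trans (sublist_cons_self i ω)),
        ?_, by rw [← hτj, hπ, wordProd_cons]⟩
      have hlen := length_eraseIdx_add_one hj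
      have hdesc := cs.isLeftDescent_iff.mp hi
      change ℓ (π (τ.eraseIdx j)) = (τ.eraseIdx j).length
      rw [hτ.eq] at hdesc
      rw [← hτj]
      omega
    · exact ⟨i :: τ, hτω.cons_cons i, cs.isReduced_cons_iff.mpr ⟨hτ, hi⟩,
        by rw [wordProd_cons, wordProd_cons, hπ]⟩

theorem bruhatLE_of_sublist {ω ω' : List B} (hω : cs.IsReduced ω) (h : ω' <+ ω) :
    cs.bruhatLE (π ω') (π ω) :=
  ⟨ω, ω', hω, rfl, h, rfl⟩

theorem bruhatLE_refl (w : W) : cs.bruhatLE w w := by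
  obtain ⟨ω, hω, rfl⟩ := cs.exists_isReduced w
  exact cs.bruhatLE_of_sublist hω (Sublist.refl ω)

theorem one_bruhatLE (w : W) : cs.bruhatLE 1 w := by
  obtain ⟨ω, hω, rfl⟩ := cs.exists_isReduced w
  simpa using cs.bruhatLE_of_sublist hω (nil_sublist ω)

theorem length_le_of_bruhatLE {u v : W} (h : cs.bruhatLE u v) : ℓ u ≤ ℓ v := by
  obtain ⟨ω, ω', hω, rfl, h, rfl⟩ := h
  exact (cs.length_wordProd_le ω').trans (hω.eq ▸ h.length_le)

theorem eq_of_bruhatLE_of_length_le {u v : W} (h : cs.bruhatLE u v) (hl : ℓ v ≤ ℓ u) :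
    u = v := by
  obtain ⟨ω, ω', hω, rfl, h, rfl⟩ := h
  have : ω.length ≤ ω'.length := hω.eq ▸ hl.trans (cs.length_wordProd_le ω')
  rw [h.eq_of_length (le_antisymm h.length_le this)]

theorem bruhatLE_simple_iff {u : W} {i : B} : cs.bruhatLE u (s i) ↔ u = 1 ∨ u = s i := by
  refine ⟨fun h ↦ ?_, ?_⟩
  · have hl := cs.length_le_of_bruhatLE h
    rw [length_simple] at hl
    rcases Nat.le_one_iff_eq_zero_or_eq_one.mp hl with h0 | h1
    · exact Or.inl (cs.length_eq_zero_iff.mp h0)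
    · exact Or.inr (cs.eq_of_bruhatLE_of_length_le h (by rw [h1, length_simple]))
  · rintro (rfl | rfl)
    · exact cs.one_bruhatLE _
    · exact cs.bruhatLE_refl _

theorem bruhatLE_simple_mul_of_bruhatLE {u w : W} {i : B} (hw : ¬cs.IsLeftDescent w i)
    (h : cs.bruhatLE u w) : cs.bruhatLE u (s i * w) := by
  obtain ⟨ω, ω', hω, rfl, h, rfl⟩ := h
  rw [← wordProd_cons]
  exact cs.bruhatLE_of_sublist (cs.isReduced_cons_iff.mpr ⟨hω, hw⟩) (h.cons i)

theorem simple_mul_bruhatLE_simple_mul {u w : W} {i : B} (hw : ¬cs.IsLeftDescent w i)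
    (h : cs.bruhatLE u w) : cs.bruhatLE (s i * u) (s i * w) := by
  obtain ⟨ω, ω', hω, rfl, h, rfl⟩ := h
  rw [← wordProd_cons, ← wordProd_cons]
  exact cs.bruhatLE_of_sublist (cs.isReduced_cons_iff.mpr ⟨hω, hw⟩) (h.cons_cons i)

theorem bruhatLE_simple_mul_self {w : W} {i : B} (hw : ¬cs.IsLeftDescent w i) :
    cs.bruhatLE w (s i * w) :=
  cs.bruhatLE_simple_mul_of_bruhatLE hw (cs.bruhatLE_refl w)

theorem simple_mul_bruhatLE_self {w : W} {i : B} (hw : cs.IsLeftDescent w i) :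
    cs.bruhatLE (s i * w) w := by
  simpa using cs.bruhatLE_simple_mul_self (cs.isLeftDescent_iff_not_isLeftDescent_mul.mp hw)

def ReflectionStep (x y : W) : Prop := ∃ t, cs.IsReflection t ∧ y = t * x ∧ ℓ x < ℓ y

/-- The Bruhat order described by chains of reflections; `chainLE_wordProd_of_sublist` and
`ChainLE.exists_sublist` identify it with the subword order for any reduced word. -/
def ChainLE : W → W → Prop := Relation.ReflTransGen cs.ReflectionStep

theorem reflectionStep_simple_mul {x : W} {i : B} (hx : ¬cs.IsLeftDescent x i) :
    cs.ReflectionStep x (s i * x) :=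
  ⟨s i, cs.isReflection_simple i, rfl, cs.not_isLeftDescent_iff_length_lt.mp hx⟩

theorem reflectionStep_simple_mul_of_isLeftDescent {x : W} {i : B} (hx : cs.IsLeftDescent x i) :
    cs.ReflectionStep (s i * x) x := by
  simpa using cs.reflectionStep_simple_mul (cs.isLeftDescent_iff_not_isLeftDescent_mul.mp hx)

variable {cs} in
theorem ReflectionStep.simple_mul {x y : W} {i : B} (h : cs.ReflectionStep x y)
    (hl : ℓ (s i * x) < ℓ (s i * y)) : cs.ReflectionStep (s i * x) (s i * y) := by
  obtain ⟨t, ht, rfl, -⟩ := h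
  refine ⟨s i * t * s i, by simpa using ht.conj (s i), ?_, hl⟩
  simp [mul_assoc]

variable {cs} in
theorem ReflectionStep.chainLE_simple_mul {b c : W} {i : B} (h : cs.ReflectionStep b c)
    (hb : ¬cs.IsLeftDescent b i) (hc : cs.IsLeftDescent c i) : cs.ChainLE b (s i * c) := by
  obtain ⟨t, ht, rfl, hlen⟩ := h
  have hne : ℓ (s i * (t * b)) ≠ ℓ (s i * b) := by
    have := (ht.conj (s i)).length_mul_right_ne (s i * b)
    simpa only [inv_simple, mul_assoc, simple_mul_simple_cancel_left] using this
  -- Either `b → s b → s c`, or exchange in a reduced word `i :: ψ` for `c` gives `b = s c`.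
  rcases lt_or_gt_of_ne hne with hlt | hgt
  · obtain ⟨ψ, hψ, hψc⟩ := cs.exists_isReduced (s i * (t * b))
    have hiψ : cs.IsReduced (i :: ψ) := cs.isReduced_cons_iff.mpr
      ⟨hψ, by rw [← hψc]; exact cs.isLeftDescent_iff_not_isLeftDescent_mul.mp hc⟩
    have hπ : π (i :: ψ) = t * b := by
      rw [wordProd_cons, ← hψc, simple_mul_simple_cancel_left]
    obtain ⟨j, hj, hbj⟩ := IsLeftInversion.exists_eraseIdx (ω := i :: ψ) (t := t)
      ⟨ht, by rwa [hπ, ← mul_assoc, ht.mul_self, one_mul]⟩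
    rw [hπ, ← mul_assoc, ht.mul_self, one_mul] at hbj
    rcases j with _ | k
    · rw [eraseIdx_cons_zero] at hbj
      rw [hψc, ← hbj]
      exact .refl
    · exfalso
      rw [eraseIdx_cons_succ, wordProd_cons] at hbj
      have h1 := cs.length_wordProd_le (ψ.eraseIdx k)
      have h2 := length_eraseIdx_add_one (l := ψ) (i := k) (by simpa using hj)
      rw [← cs.simple_mul_simple_cancel_left (w := π (ψ.eraseIdx k)) i, ← hbj] at h1
      rw [hψc, hψ.eq] at hlt
      omega
  · exact .tail (.single (cs.reflectionStep_simple_mul hb)) (ReflectionStep.simple_mul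
      ⟨t, ht, rfl, hlen⟩ hgt)

variable {cs} in
theorem ChainLE.chainLE_simple_mul {x y : W} {i : B} (h : cs.ChainLE x y)
    (hx : ¬cs.IsLeftDescent x i) (hy : cs.IsLeftDescent y i) : cs.ChainLE x (s i * y) := by
  induction h with
  | refl => exact absurd hy hx
  | @tail b c hxb hbc ih =>
    by_cases hb : cs.IsLeftDescent b i
    · refine (ih hb).tail (hbc.simple_mul ?_)
      have := cs.isLeftDescent_iff.mp hb
      have := cs.isLeftDescent_iff.mp hy
      obtain ⟨-, -, -, hlen⟩ := hbc
      omega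
    · exact hxb.trans (hbc.chainLE_simple_mul hb hy)

variable {cs} in
theorem ChainLE.simple_mul_chainLE_simple_mul {x y : W} {i : B} (h : cs.ChainLE x y)
    (hy : ¬cs.IsLeftDescent y i) : cs.ChainLE (s i * x) (s i * y) := by
  induction hn : ℓ y using Nat.strong_induction_on generalizing x y with
  | _ n ih =>
  rcases Relation.ReflTransGen.cases_tail h with rfl | ⟨b, hxb, hby⟩
  · exact .refl
  have hlen : ℓ b < ℓ y := by obtain ⟨-, -, -, hlen⟩ := hby; exact hlen
  have hstep := cs.reflectionStep_simple_mul hy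
  by_cases hb : cs.IsLeftDescent b i
  · by_cases hx : cs.IsLeftDescent x i
    · exact ((Relation.ReflTransGen.single
        (cs.reflectionStep_simple_mul_of_isLeftDescent hx)).trans (hxb.tail hby)).tail hstep
    · have hsb := cs.isLeftDescent_iff_not_isLeftDescent_mul.mp hb
      have h1 := ih (ℓ (s i * b)) (by have := cs.isLeftDescent_iff.mp hb; omega)
        (ChainLE.chainLE_simple_mul hxb hx hb) hsb rfl
      rw [simple_mul_simple_cancel_left] at h1
      exact (h1.tail hby).tail hstep
  · refine (ih (ℓ b) (hn ▸ hlen) hxb hb rfl).tail (hby.simple_mul ?_)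
    have := cs.not_isLeftDescent_iff.mp hb
    have := cs.not_isLeftDescent_iff.mp hy
    omega

theorem chainLE_wordProd_of_sublist {ω ω' : List B} (hω : cs.IsReduced ω) (h : ω' <+ ω) :
    cs.ChainLE (π ω') (π ω) := by
  induction ω generalizing ω' with
  | nil => rw [sublist_nil.mp h]; exact .refl
  | cons i ω ih =>
    obtain ⟨hω, hi⟩ := cs.isReduced_cons_iff.mp hω
    rw [wordProd_cons]
    rcases sublist_cons_iff.mp h with hω' | ⟨ω'', rfl, hω''⟩
    · exact (ih hω hω').tail (cs.reflectionStep_simple_mul hi)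
    · rw [wordProd_cons]
      exact (ih hω hω'').simple_mul_chainLE_simple_mul hi

variable {cs} in
theorem ChainLE.exists_sublist {x y : W} (h : cs.ChainLE x y) {χ : List B}
    (hχ : cs.IsReduced χ) (hy : π χ = y) : ∃ τ, τ <+ χ ∧ π τ = x := by
  induction h generalizing χ with
  | refl => exact ⟨χ, Sublist.refl χ, hy⟩
  | @tail b c hxb hbc ih =>
    obtain ⟨t, ht, rfl, hlen⟩ := hbc
    have htχ : t * π χ = b := by rw [hy, ← mul_assoc, ht.mul_self, one_mul]
    obtain ⟨j, -, hj⟩ := IsLeftInversion.exists_eraseIdx ⟨ht, by rwa [htχ, hy]⟩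
    obtain ⟨τ', hτ', hτ'red, hτ'π⟩ := cs.exists_isReduced_sublist (χ.eraseIdx j)
    obtain ⟨τ, hτ, hτπ⟩ := ih hτ'red (by rw [hτ'π, ← hj, htχ])
    exact ⟨τ, hτ.trans (hτ'.trans (eraseIdx_sublist χ j)), hτπ⟩

variable {cs} in
theorem bruhatLE.exists_sublist {u v : W} (h : cs.bruhatLE u v) {χ : List B}
    (hχ : cs.IsReduced χ) (hv : π χ = v) : ∃ τ, τ <+ χ ∧ π τ = u := by
  obtain ⟨ω, ω', hω, rfl, h, rfl⟩ := h
  exact (cs.chainLE_wordProd_of_sublist hω h).exists_sublist hχ hv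

theorem bruhatLE_trans {u v w : W} (huv : cs.bruhatLE u v) (hvw : cs.bruhatLE v w) :
    cs.bruhatLE u w := by
  obtain ⟨ω, ω', hω, rfl, hω', rfl⟩ := hvw
  obtain ⟨τ, hτ, hτred, hτπ⟩ := cs.exists_isReduced_sublist ω'
  obtain ⟨σ, hσ, rfl⟩ := huv.exists_sublist hτred hτπ
  exact cs.bruhatLE_of_sublist hω (hσ.trans (hτ.trans hω'))

theorem bruhatLE_or_simple_mul_bruhatLE {u w : W} {i : B} (h : cs.bruhatLE u (s i * w)) :
    cs.bruhatLE u w ∨ cs.bruhatLE (s i * u) w := by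
  by_cases hw : cs.IsLeftDescent w i
  · exact .inl (cs.bruhatLE_trans h (cs.simple_mul_bruhatLE_self hw))
  obtain ⟨ω, hω, rfl⟩ := cs.exists_isReduced w
  obtain ⟨τ, hτ, rfl⟩ :=
    h.exists_sublist (cs.isReduced_cons_iff.mpr ⟨hω, hw⟩) (wordProd_cons ..)
  rcases sublist_cons_iff.mp hτ with hτω | ⟨τ', rfl, hτ'ω⟩
  · exact .inl (cs.bruhatLE_of_sublist hω hτω)
  · rw [wordProd_cons, simple_mul_simple_cancel_left]
    exact .inr (cs.bruhatLE_of_sublist hω hτ'ω)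

theorem simple_mul_bruhatLE_of_isLeftDescent {u v : W} {i : B} (hv : cs.IsLeftDescent v i)
    (h : cs.bruhatLE u v) : cs.bruhatLE (s i * u) v := by
  have hsv := cs.isLeftDescent_iff_not_isLeftDescent_mul.mp hv
  rw [← cs.simple_mul_simple_cancel_left (w := v) i] at h ⊢
  rcases cs.bruhatLE_or_simple_mul_bruhatLE h with h | h
  · exact cs.simple_mul_bruhatLE_simple_mul hsv h
  · exact cs.bruhatLE_simple_mul_of_bruhatLE hsv h

variable {cs} in
theorem IsUniqueBruhatMin.bruhatLE {S : Set W} {m z : W} (h : cs.IsUniqueBruhatMin S m)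
    (hz : z ∈ S) : cs.bruhatLE m z := by
  -- A length-minimal element of `S` below `z` is minimal in `S`, hence it is `m`.
  obtain ⟨z₀, ⟨hz₀S, hz₀z⟩, hmin⟩ := (measure cs.length).wf.has_min
    {z' | z' ∈ S ∧ cs.bruhatLE z' z} ⟨z, hz, cs.bruhatLE_refl z⟩
  have hz₀ : z₀ = m := h.2 z₀ hz₀S fun z' hz'S hz'z₀ ↦
    cs.eq_of_bruhatLE_of_length_le hz'z₀
      (not_lt.mp (hmin z' ⟨hz'S, cs.bruhatLE_trans hz'z₀ hz₀z⟩))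
  exact hz₀ ▸ hz₀z

theorem isUniqueBruhatMin_of_forall_bruhatLE {S : Set W} {m : W} (hm : m ∈ S)
    (h : ∀ z ∈ S, cs.bruhatLE m z) : cs.IsUniqueBruhatMin S m :=
  ⟨⟨hm, fun z hz hzm ↦
      cs.eq_of_bruhatLE_of_length_le hzm (cs.length_le_of_bruhatLE (h z hz))⟩,
    fun z hz hmin ↦ (hmin m hm (h z hz)).symm⟩

variable {cs} in
theorem IsUniqueBruhatMin.unique {S : Set W} {m₁ m₂ : W} (h₁ : cs.IsUniqueBruhatMin S m₁)
    (h₂ : cs.IsUniqueBruhatMin S m₂) : m₁ = m₂ :=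
  (h₁.2 m₂ h₂.1.1 h₂.1.2).symm

theorem triSet_simple (i : B) (m : W) : cs.triSet (s i) m = {m, s i * m} := by
  ext v
  simp only [triSet, bruhatLE_simple_iff, Set.mem_ofPred_eq, Set.mem_insert_iff,
    Set.mem_singleton_iff]
  constructor
  · rintro ⟨u, rfl | rfl, rfl⟩
    · exact .inl (one_mul m)
    · exact .inr rfl
  · rintro (rfl | rfl)
    · exact ⟨1, .inl rfl, (one_mul v).symm⟩
    · exact ⟨s i, .inr rfl, rfl⟩

theorem isUniqueBruhatMin_triSet_simple {i : B} {m : W} (hm : ¬cs.IsLeftDescent m i) :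
    cs.IsUniqueBruhatMin (cs.triSet (s i) m) m := by
  rw [triSet_simple]
  refine cs.isUniqueBruhatMin_of_forall_bruhatLE (.inl rfl) ?_
  rintro _ (rfl | rfl)
  · exact cs.bruhatLE_refl _
  · exact cs.bruhatLE_simple_mul_self hm

theorem isUniqueBruhatMin_triSet_simple_mul {i : B} {w z m m' : W} (hw : ¬cs.IsLeftDescent w i)
    (hm : cs.IsUniqueBruhatMin (cs.triSet w z) m)
    (hm' : cs.IsUniqueBruhatMin (cs.triSet (s i) m) m') :
    cs.IsUniqueBruhatMin (cs.triSet (s i * w) z) m' := by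
  rw [triSet_simple] at hm'
  have hle : cs.bruhatLE m' m ∧ cs.bruhatLE m' (s i * m) := ⟨hm'.bruhatLE (Set.mem_insert m _),
    hm'.bruhatLE (Set.mem_insert_of_mem m rfl)⟩
  obtain ⟨u₀, hu₀, hm₀⟩ := hm.1.1
  refine cs.isUniqueBruhatMin_of_forall_bruhatLE ?_ ?_
  · rcases hm'.1.1 with rfl | rfl
    · exact ⟨u₀, cs.bruhatLE_simple_mul_of_bruhatLE hw hu₀, hm₀⟩
    · exact ⟨s i * u₀, cs.simple_mul_bruhatLE_simple_mul hw hu₀, by rw [hm₀, mul_assoc]⟩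
  rintro _ ⟨u, hu, rfl⟩
  rcases cs.bruhatLE_or_simple_mul_bruhatLE hu with huw | hsuw
  · exact cs.bruhatLE_trans hle.1 (hm.bruhatLE ⟨u, huw, rfl⟩)
  have hmsv : cs.bruhatLE m (s i * (u * z)) := by
    simpa [mul_assoc] using hm.bruhatLE ⟨s i * u, hsuw, rfl⟩
  rcases cs.bruhatLE_or_simple_mul_bruhatLE hmsv with h | h
  · exact cs.bruhatLE_trans hle.1 h
  · exact cs.bruhatLE_trans hle.2 h

theorem not_isLeftDescent_of_isUniqueBruhatMin_triSet {i : B} {v z m : W}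
    (hv : cs.IsLeftDescent v i) (hm : cs.IsUniqueBruhatMin (cs.triSet v z) m) :
    ¬cs.IsLeftDescent m i := by
  intro hmi
  obtain ⟨u, hu, rfl⟩ := hm.1.1
  have := hm.bruhatLE
    ⟨s i * u, cs.simple_mul_bruhatLE_of_isLeftDescent hv hu, (mul_assoc ..).symm⟩
  exact absurd (cs.length_le_of_bruhatLE this) (not_le.mpr hmi)

end CoxeterSystem

/-- `(x, y) ↦ x ▷ y` is a left monoid action of the Demazure monoid `(W, ∗)` on `W`:
`1 ▷ y = y` and `(x ∗ y) ▷ z = x ▷ (y ▷ z)`. -/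
theorem tri_is_monoid_action {B W : Type*} [Group W] {M : CoxeterMatrix B} (cs : CoxeterSystem M W)
    (star : W → W → W)
    (hstar_one : ∀ w : W, star 1 w = w)
    (hstar_simple : ∀ (i : B) (w : W), star (cs.simple i) w =
      if cs.length w < cs.length (cs.simple i * w) then cs.simple i * w else w)
    (hstar_assoc : ∀ a b c : W, star (star a b) c = star a (star b c))
    (tri : W → W → W)
    (htri : ∀ x y : W, cs.IsUniqueBruhatMin (cs.triSet x y) (tri x y))
 :
    (∀ y : W, tri 1 y = y) ∧
    (∀ x y z : W, tri (star x y) z = tri x (tri y z)) := by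
  have hone (y : W) : tri 1 y = y := by
    obtain ⟨u, hu, hy⟩ := (htri 1 y).1.1
    rw [hy, cs.eq_of_bruhatLE_of_length_le hu (by simp), one_mul]
  have hstar (i : B) (v z : W) : tri (star (cs.simple i) v) z = tri (cs.simple i) (tri v z) := by
    rw [hstar_simple]
    split_ifs with hv
    · exact (htri _ z).unique (cs.isUniqueBruhatMin_triSet_simple_mul
        (cs.not_isLeftDescent_iff_length_lt.mpr hv) (htri v z) (htri _ _))
    · have hd : cs.IsLeftDescent v i := not_not.mp (mt cs.not_isLeftDescent_iff_length_lt.mp hv)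
      exact ((htri _ _).unique (cs.isUniqueBruhatMin_triSet_simple
        (cs.not_isLeftDescent_of_isUniqueBruhatMin_triSet hd (htri v z)))).symm
  refine ⟨hone, fun x y z ↦ ?_⟩
  obtain ⟨ω, hω, rfl⟩ := cs.exists_isReduced x
  induction ω with
  | nil => rw [CoxeterSystem.wordProd_nil, hstar_one, hone]
  | cons i ω ih =>
    obtain ⟨hω, hi⟩ := cs.isReduced_cons_iff.mp hω
    have hπ : star (cs.simple i) (cs.wordProd ω) = cs.wordProd (i :: ω) := by
      rw [hstar_simple, if_pos (cs.not_isLeftDescent_iff_length_lt.mp hi),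
        CoxeterSystem.wordProd_cons]
    rw [← hπ, hstar_assoc, hstar, ih hω, hstar]
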